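/- For every odd natural number n, it is not the case that Pn(G_n) ⊲ ⋆. -/

import Mathlib

universe u

/-- Combinatorial games over a poset `A` of atoms: either an atomic game `[a]` for an atom
`a : A`, or a composite game `⟨L|R⟩` where `L` and `R` are nonempty families of games
(the left and right options). -/
inductive PoGame (A : Type u) : Type (u + 1) where
  | atom : A → PoGame A
  | mk : (xl xr : Type u) → (xl → PoGame A) → (xr → PoGame A) →
      Nonempty xl → Nonempty xr → PoGame A

namespace SetTheory

/-- Pre-game (as in the older Mathlib `SetTheory.PGame`, since removed from Mathlib). -/
inductive PGame : Type (u + 1)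
  | mk : ∀ α β : Type u, (α → PGame) → (β → PGame) → PGame

/-- The pre-game `0 = { | }` (as in the older Mathlib). -/
instance PGame.instZeroPGame : Zero PGame :=
  ⟨⟨PEmpty, PEmpty, PEmpty.elim, PEmpty.elim⟩⟩

end SetTheory

namespace PoGame

variable {A : Type u}

/-- `G` is an atomic game. -/
def IsAtomic : PoGame A → Prop
  | atom _ => True
  | mk _ _ _ _ _ _ => False

/-- `G` is a left option of the game given as second argument. -/
def IsLeftOption (G : PoGame A) : PoGame A → Prop
  | atom _ => False
  | mk _ _ L _ _ _ => ∃ i, L i = G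

/-- `G` is a right option of the game given as second argument. -/
def IsRightOption (G : PoGame A) : PoGame A → Prop
  | atom _ => False
  | mk _ _ _ R _ _ => ∃ j, R j = G

section Order

variable [PartialOrder A]

mutual
  /-- `Le G H` is the relation `G ≤ H` on games over the poset `A`, defined by mutual
  recursion with `Lf` (the relation `G ⊲ H`): `G ≤ H` iff every left option `G^L`
  satisfies `G^L ⊲ H`, every right option `H^R` satisfies `G ⊲ H^R`, and if `G` or `H`
  is atomic then `G ⊲ H`. -/
  inductive Le : PoGame A → PoGame A → Prop
    | intro (G H : PoGame A)
        (hL : ∀ G', IsLeftOption G' G → Lf G' H)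
        (hR : ∀ H', IsRightOption H' H → Lf G H')
        (hA : IsAtomic G ∨ IsAtomic H → Lf G H) : Le G H

  /-- `Lf G H` is the relation `G ⊲ H` on games over the poset `A`: it holds iff some
  right option `G^R` satisfies `G^R ≤ H`, or some left option `H^L` satisfies `G ≤ H^L`,
  or `G = [a]` and `H = [b]` are atomic with `a ≤ b` in `A`. -/
  inductive Lf : PoGame A → PoGame A → Prop
    | rightOption (G H G' : PoGame A) (h : IsRightOption G' G) (hle : Le G' H) : Lf G H
    | leftOption (G H H' : PoGame A) (h : IsLeftOption H' H) (hle : Le G H') : Lf G H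
    | atom (a b : A) (hab : a ≤ b) : Lf (atom a) (atom b)
end

/-- Two games are equivalent if `G ≤ H` and `H ≤ G`. -/
def GEquiv (G H : PoGame A) : Prop := Le G H ∧ Le H G

/-- `G` is locally monotone if `G ≤ G^L` for every left option `G^L` and `G^R ≤ G` for
every right option `G^R`. -/
def LocallyMonotone (G : PoGame A) : Prop :=
  (∀ G', IsLeftOption G' G → Le G G') ∧ (∀ G', IsRightOption G' G → Le G' G)

/-- `G` is an option (left or right) of `H`. -/
def IsOption (G H : PoGame A) : Prop := IsLeftOption G H ∨ IsRightOption G H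

/-- `G` is a position of `H`: `H` itself, an option of `H`, an option of an option, etc. -/
def IsPosition (G H : PoGame A) : Prop := Relation.ReflTransGen IsOption G H

/-- `G` is monotone if every position of `G` is locally monotone. -/
def Monotone (G : PoGame A) : Prop := ∀ K, IsPosition K G → LocallyMonotone K

end Order

/-- The 5-element linearly ordered set `L5 = {-3, -2, -1, 0, 1}`. -/
abbrev L5 : Type := {a : ℤ // -3 ≤ a ∧ a ≤ 1}

/-- `G` has mean `C`: an atomic game `[a]` has mean `a`, and a composite game has mean `C`
iff every left option has mean `C + 1` and every right option has mean `C - 1`. -/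
def HasMean : PoGame L5 → ℤ → Prop
  | atom a, C => (a : ℤ) = C
  | mk _ _ L R _ _, C => (∀ i, HasMean (L i) (C + 1)) ∧ (∀ j, HasMean (R j) (C - 1))

/-- The game `⟨G | H⟩` with a single left option `G` and a single right option `H`. -/
def ofPair (G H : PoGame A) : PoGame A :=
  mk PUnit PUnit (fun _ => G) (fun _ => H) ⟨PUnit.unit⟩ ⟨PUnit.unit⟩

/-- `⋆ = ⟨-1 | -3⟩`. -/
def star : PoGame L5 := ofPair (atom ⟨-1, by norm_num⟩) (atom ⟨-3, by norm_num⟩)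

/-- `M(G) = ⟨1 | G⟩`. -/
def M (G : PoGame L5) : PoGame L5 := ofPair (atom ⟨1, by norm_num⟩) G

/-- `P(G) = ⟨G | -2⟩`. -/
def P (G : PoGame L5) : PoGame L5 := ofPair G (atom ⟨-2, by norm_num⟩)

/-- `P⋆(G) = ⟨G | ⋆⟩`. -/
def Pstar (G : PoGame L5) : PoGame L5 := ofPair G star

/-- `Pn n G = P G` if `n` is odd, `P⋆ G` if `n` is even. -/
def Pn (n : ℕ) (G : PoGame L5) : PoGame L5 := if Odd n then P G else Pstar G

/-- The sequence `G_0 = [0]`, `G_{n+1} = M (Pn n (G_n))`. -/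
def Gseq : ℕ → PoGame L5
  | 0 => atom ⟨0, by norm_num⟩
  | n + 1 => M (Pn n (Gseq n))

/-- The normal-play game obtained from a game over `L5` by replacing every atom by the
normal-play game `0 = { | }`, keeping the tree of left and right options. -/
def np : PoGame L5 → SetTheory.PGame.{0}
  | atom _ => 0
  | mk xl xr L R _ _ => SetTheory.PGame.mk xl xr (fun i => np (L i)) (fun j => np (R j))

end PoGame

/-!
`P(G) ⊲ ⋆` needs either `-2 ≤ ⋆`, impossible because `-2 ⋪ -3`, or `P(G) ≤ -1`, which
forces `G ⊲ -1`. And `G_n ⊲ -1` never holds: since `-1` has no left options,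
`⟨1 | Pn(G_{n-1})⟩ ⊲ -1` forces `Pn(G_{n-1}) ≤ -1`, hence `G_{n-1} ⊲ -1`, down to `0 ⋪ -1`.
-/

namespace PoGame

variable {A : Type*}

@[simp]
lemma isLeftOption_ofPair {G H K : PoGame A} : IsLeftOption K (ofPair G H) ↔ K = G := by
  simp [ofPair, IsLeftOption, eq_comm]

@[simp]
lemma isRightOption_ofPair {G H K : PoGame A} : IsRightOption K (ofPair G H) ↔ K = H := by
  simp [ofPair, IsRightOption, eq_comm]

@[simp]
lemma not_isLeftOption_atom {K : PoGame A} {a : A} : ¬ IsLeftOption K (atom a) := id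

section Order

variable [PartialOrder A]

lemma Le.lf_of_isLeftOption {G H G' : PoGame A} (h : Le G H) (hG' : IsLeftOption G' G) :
    Lf G' H := by
  cases h with
  | intro _ _ hL _ _ => exact hL G' hG'

lemma Le.lf_of_isRightOption {G H H' : PoGame A} (h : Le G H) (hH' : IsRightOption H' H) :
    Lf G H' := by
  cases h with
  | intro _ _ _ hR _ => exact hR H' hH'

lemma atom_lf_atom_iff {a b : A} : Lf (atom a) (atom b) ↔ a ≤ b := by
  refine ⟨fun h => ?_, Lf.atom a b⟩
  cases h with
  | rightOption _ _ _ h _ => exact h.elim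
  | leftOption _ _ _ h _ => exact h.elim
  | atom _ _ hab => exact hab

lemma ofPair_lf_iff {G H K : PoGame A} :
    Lf (ofPair G H) K ↔ Le H K ∨ ∃ K', IsLeftOption K' K ∧ Le (ofPair G H) K' := by
  refine ⟨fun h => ?_, ?_⟩
  · cases h with
    | rightOption _ _ _ h hle => exact .inl (isRightOption_ofPair.mp h ▸ hle)
    | leftOption _ _ K' h hle => exact .inr ⟨K', h, hle⟩
  · rintro (hle | ⟨K', hK', hle⟩)
    · exact .rightOption _ _ H (isRightOption_ofPair.mpr rfl) hle
    · exact .leftOption _ _ K' hK' hle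

lemma ofPair_lf_atom_iff {G H : PoGame A} {b : A} :
    Lf (ofPair G H) (atom b) ↔ Le H (atom b) := by
  simp [ofPair_lf_iff]

end Order

lemma isLeftOption_Pn (n : ℕ) (G : PoGame L5) : IsLeftOption G (Pn n G) := by
  unfold Pn P Pstar
  split <;> simp

lemma not_Gseq_lf_neg_one (n : ℕ) : ¬ Lf (Gseq n) (atom ⟨-1, by norm_num⟩) := by
  induction n with
  | zero => simp [Gseq, atom_lf_atom_iff, ← Subtype.coe_le_coe]
  | succ n ih =>
    rw [Gseq, M, ofPair_lf_atom_iff]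
    exact fun hle => ih (hle.lf_of_isLeftOption (isLeftOption_Pn n _))

lemma not_P_lf_star {G : PoGame L5} (hG : ¬ Lf G (atom ⟨-1, by norm_num⟩)) :
    ¬ Lf (P G) star := by
  rw [P, ofPair_lf_iff]
  rintro (hle | ⟨K, hK, hle⟩)
  · have h := hle.lf_of_isRightOption (isRightOption_ofPair.mpr rfl)
    simp [atom_lf_atom_iff, ← Subtype.coe_le_coe] at h
  · rw [star, isLeftOption_ofPair] at hK
    exact hG (hK ▸ hle.lf_of_isLeftOption (isLeftOption_ofPair.mpr rfl))

end PoGame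

open PoGame in
/-- For every odd natural number `n`, it is not the case that `Pn(G_n) ⊲ ⋆`. -/
theorem stmt_9 (n : ℕ) (hn : Odd n) : ¬ Lf (Pn n (Gseq n)) star := by
  rw [Pn, if_pos hn]
  exact not_P_lf_star (not_Gseq_lf_neg_one n)
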